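/- Let F be a fixed connected graph on f ≥ 2 vertices and let k ≥ f satisfy k ≢ 0 and k ≢ 1 (mod f). Then Σ_G (−1)^{#E(G)} = 0, where the sum ranges over all graphs G on the labeled vertex set {1,…,k} containing at least one connected component isomorphic to F. -/

import Mathlib

open scoped Classical

/-- `G` contains a connected component (an isolated subgraph) isomorphic to `F`: there is a
vertex set `s` closed under adjacency whose induced subgraph is isomorphic to `F`. -/
def hasIsoComponent {V α : Type} (G : SimpleGraph V) (F : SimpleGraph α) : Prop :=
  ∃ s : Finset V, (∀ u ∈ s, ∀ v : V, G.Adj u v → v ∈ s) ∧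
    Nonempty (G.induce ↑s ≃g F)

/-!
Write the sum by inclusion-exclusion over the nonempty families `T` of vertex sets that are
prescribed to be isolated copies of `F`. Since `F` is connected, the copies in `T` are disjoint
`f`-sets, so they cover a multiple of `f` vertices; as `k` is neither `0` nor `1` mod `f`, at least
two vertices `a ≠ b` remain uncovered. Toggling the edge `ab` keeps every copy in `T` isolated and
changes the parity of the number of edges, so each inclusion-exclusion term vanishes.
-/

open Finset SimpleGraph
open scoped symmDiff

lemma one_lt_card_compl_biUnion {V : Type} [Fintype V] [DecidableEq V] {f : ℕ}
    {T : Finset (Finset V)} (hT : (T : Set (Finset V)).PairwiseDisjoint id)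
    (hcard : ∀ s ∈ T, #s = f) (h0 : Fintype.card V % f ≠ 0) (h1 : Fintype.card V % f ≠ 1) :
    1 < #(T.biUnion id)ᶜ := by
  have hunion : #(T.biUnion id) = f * #T := by
    rw [card_biUnion hT]
    simp only [id_eq]
    rw [sum_congr rfl hcard, sum_const, smul_eq_mul, mul_comm]
  have hle : f * #T ≤ Fintype.card V := hunion ▸ card_le_univ _
  have hmod : (Fintype.card V - f * #T) % f = Fintype.card V % f := Nat.sub_mul_mod hle
  rw [card_compl, hunion]
  have hf : f ≠ 1 := by
    rintro rfl
    exact h0 (Nat.mod_one _)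
  by_contra! hlt
  interval_cases h : Fintype.card V - f * #T
  · exact h0 (by simp [← hmod])
  · exact h1 (by rw [← hmod, Nat.one_mod_eq_one.2 hf])

namespace SimpleGraph

variable {V α : Type}

section EdgeToggle

variable {G : SimpleGraph V} {a b : V}

lemma symmDiff_edge_adj_of_ne {u v : V} (ha : u ≠ a) (hb : u ≠ b) :
    (G ∆ edge a b).Adj u v ↔ G.Adj u v := by
  simp [symmDiff_def, edge_adj, ha, hb]

lemma card_edgeSet_sup_edge [Finite V] (hab : a ≠ b) (h : ¬G.Adj a b) :
    Nat.card (G ⊔ edge a b).edgeSet = Nat.card G.edgeSet + 1 := by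
  rw [edgeSet_sup, edgeSet_edge_of_ne hab, Set.union_singleton, Nat.card_coe_set_eq,
    Set.ncard_insert_of_notMem (by simpa using h), Nat.card_coe_set_eq]

lemma neg_one_pow_card_edgeSet_symmDiff_edge [Finite V] (hab : a ≠ b) :
    (-1 : ℤ) ^ Nat.card (G ∆ edge a b).edgeSet = -(-1) ^ Nat.card G.edgeSet := by
  have key : ∀ H : SimpleGraph V, ¬H.Adj a b →
      (-1 : ℤ) ^ Nat.card (H ∆ edge a b).edgeSet = -(-1) ^ Nat.card H.edgeSet := fun H hH => by
    rw [(symmDiff_eq_sup H _).2 ((disjoint_edge H).2 hH), card_edgeSet_sup_edge hab hH,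
      pow_succ, mul_neg_one]
  by_cases h : G.Adj a b
  · have hG : ¬(G ∆ edge a b).Adj a b := by simp [symmDiff_def, edge_adj, h, hab]
    rw [← neg_eq_iff_eq_neg, ← key _ hG, symmDiff_symmDiff_cancel_right]
  · exact key G h

lemma sum_neg_one_pow_card_edgeSet_eq_zero [Finite V]
    {𝒢 : Finset (SimpleGraph V)} (hab : a ≠ b) (h𝒢 : ∀ G ∈ 𝒢, G ∆ edge a b ∈ 𝒢) :
    ∑ G ∈ 𝒢, (-1 : ℤ) ^ Nat.card G.edgeSet = 0 := by
  refine sum_involution (fun G _ => G ∆ edge a b) (fun G _ => ?_) (fun G _ _ => ?_)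
    h𝒢 (fun G _ => symmDiff_symmDiff_cancel_right _ _)
  · rw [neg_one_pow_card_edgeSet_symmDiff_edge hab, add_neg_cancel]
  · rw [Ne, symmDiff_eq_left, ← edgeSet_inj, edgeSet_edge_of_ne hab, edgeSet_bot]
    exact Set.singleton_ne_empty _

end EdgeToggle

def IsIsoComponent (G : SimpleGraph V) (F : SimpleGraph α) (s : Finset V) : Prop :=
  (∀ u ∈ s, ∀ v : V, G.Adj u v → v ∈ s) ∧ Nonempty (G.induce ↑s ≃g F)

lemma hasIsoComponent_iff {G : SimpleGraph V} {F : SimpleGraph α} :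
    hasIsoComponent G F ↔ ∃ s, G.IsIsoComponent F s := Iff.rfl

namespace IsIsoComponent

variable {G : SimpleGraph V} {F : SimpleGraph α} {s t : Finset V}

lemma card_eq (h : G.IsIsoComponent F s) : #s = Nat.card α := by
  obtain ⟨e⟩ := h.2
  simpa using Nat.card_congr e.toEquiv

lemma mem_of_reachable (h : G.IsIsoComponent F s) {u v : V} (hu : u ∈ s)
    (huv : G.Reachable u v) : v ∈ s := by
  rw [reachable_iff_reflTransGen] at huv
  induction huv with
  | refl => exact hu
  | tail _ hadj ih => exact h.1 _ ih _ hadj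

lemma mem_iff_reachable (hF : F.Connected) (h : G.IsIsoComponent F s) {u : V} (hu : u ∈ s)
    (v : V) : v ∈ s ↔ G.Reachable u v := by
  refine ⟨fun hv => ?_, h.mem_of_reachable hu⟩
  obtain ⟨e⟩ := h.2
  exact ((e.connected_iff.2 hF) ⟨u, hu⟩ ⟨v, hv⟩).map (Embedding.induce (s : Set V)).toHom

lemma disjoint_of_ne (hF : F.Connected) (hs : G.IsIsoComponent F s)
    (ht : G.IsIsoComponent F t) (hst : s ≠ t) : Disjoint s t := by
  refine Finset.disjoint_left.2 fun u hus hut => hst ?_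
  ext v
  rw [hs.mem_iff_reachable hF hus, ht.mem_iff_reachable hF hut]

lemma symmDiff_edge {a b : V} (h : G.IsIsoComponent F s) (ha : a ∉ s) (hb : b ∉ s) :
    (G ∆ edge a b).IsIsoComponent F s := by
  have hadj : ∀ u ∈ s, ∀ v, (G ∆ edge a b).Adj u v ↔ G.Adj u v := fun u hu v =>
    symmDiff_edge_adj_of_ne (ne_of_mem_of_not_mem hu ha) (ne_of_mem_of_not_mem hu hb)
  have hinduce : (G ∆ edge a b).induce (s : Set V) = G.induce s := by
    ext ⟨u, hu⟩ ⟨v, _⟩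
    exact hadj u hu v
  exact ⟨fun u hu v huv => h.1 u hu v ((hadj u hu v).1 huv), hinduce ▸ h.2⟩

end IsIsoComponent

lemma sum_neg_one_pow_card_edgeSet_forall_isIsoComponent [Fintype V] [DecidableEq V]
    {F : SimpleGraph α} (hF : F.Connected)
    (h0 : Fintype.card V % Nat.card α ≠ 0) (h1 : Fintype.card V % Nat.card α ≠ 1)
    (T : Finset (Finset V)) :
    ∑ G ∈ univ.filter (fun G : SimpleGraph V => ∀ s ∈ T, G.IsIsoComponent F s),
      (-1 : ℤ) ^ Nat.card G.edgeSet = 0 := by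
  rcases (univ.filter fun G : SimpleGraph V => ∀ s ∈ T, G.IsIsoComponent F s)
    |>.eq_empty_or_nonempty with h | ⟨G₀, hG₀⟩
  · rw [h, sum_empty]
  have hcomp := (mem_filter.1 hG₀).2
  obtain ⟨a, ha, b, hb, hab⟩ := one_lt_card.1 <| one_lt_card_compl_biUnion
    (fun s hs t ht hst => (hcomp s hs).disjoint_of_ne hF (hcomp t ht) hst)
    (fun s hs => (hcomp s hs).card_eq) h0 h1
  simp only [mem_compl, mem_biUnion, id_eq, not_exists, not_and] at ha hb
  refine sum_neg_one_pow_card_edgeSet_eq_zero hab fun G hG => ?_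
  simp only [mem_filter, mem_univ, true_and] at hG ⊢
  exact fun s hs => (hG s hs).symmDiff_edge (ha s hs) (hb s hs)

end SimpleGraph

theorem stmt_17_general (f : ℕ) (F : SimpleGraph (Fin f)) (hFconn : F.Connected)
    (k : ℕ) (h0 : k % f ≠ 0) (h1 : k % f ≠ 1) :
    ∑ G ∈ Finset.univ.filter (fun G : SimpleGraph (Fin k) => hasIsoComponent G F),
        ((-1 : ℤ)) ^ (Nat.card G.edgeSet) = 0 := by
  let 𝒮 (s : Finset (Fin k)) := univ.filter fun G : SimpleGraph (Fin k) => G.IsIsoComponent F s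
  have hunion :
      univ.filter (fun G : SimpleGraph (Fin k) => hasIsoComponent G F) = univ.biUnion 𝒮 := by
    ext G
    simp [𝒮, hasIsoComponent_iff]
  rw [hunion, inclusion_exclusion_sum_biUnion]
  refine sum_eq_zero fun T _ => ?_
  have hinf : T.1.inf' (mem_filter.1 T.2).2 𝒮 =
      univ.filter fun G : SimpleGraph (Fin k) => ∀ s ∈ T.1, G.IsIsoComponent F s := by
    ext G
    simp [𝒮]
  rw [hinf, sum_neg_one_pow_card_edgeSet_forall_isIsoComponent hFconn (by simpa using h0)
    (by simpa using h1), smul_zero]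

/-- Let `F` be a connected graph on `f ≥ 2` vertices and `k ≥ f` with
`k % f ∉ {0,1}`. Then the alternating-by-edge-count sum over all graphs on the labeled vertex
set `{1,…,k}` having a connected component isomorphic to `F` vanishes. -/
theorem stmt_17 (f : ℕ) (hf : 2 ≤ f) (F : SimpleGraph (Fin f)) (hFconn : F.Connected)
    (k : ℕ) (hk : f ≤ k) (h0 : k % f ≠ 0) (h1 : k % f ≠ 1) :
    ∑ G ∈ Finset.univ.filter (fun G : SimpleGraph (Fin k) => hasIsoComponent G F),
        ((-1 : ℤ)) ^ (Nat.card G.edgeSet) = 0 :=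
  stmt_17_general f F hFconn k h0 h1
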